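/- arXiv:1006.2979 — 6 statements merged into one kernel-verified Lean document; each statement's English description precedes it below -/
import Mathlib

section
/- Let S be a fusion set, i.e. a set equipped with a partial associative fusion operation · : S × S → S ∪ {∅} and an involutive conjugation s ↦ s̄, such that for all s₁, s₂, s₃ ∈ S one has s₁ · s₂ = s̄₃ if and only if s₂ · s₃ = s̄₁. Then the induced fusion on the free monoid M = ⟨S⟩, defined by w · w' = w₁…w_{k-1}(w_k · w'₁)w'₂…w'_l (empty if w_k · w'₁ = ∅), is associative (with the convention that any fusion involving ∅ is ∅). -/
/-- Fusion of two words in the free monoid over `S`: fuse the last letter of `w`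
with the first letter of `w'`; empty (`none`) if either word is empty or the
letter fusion is empty. -/
def wfuse {S : Type*} (f : S → S → Option S) (w w' : List S) : Option (List S) :=
  match w.getLast?, w'.head? with
  | some a, some b => (f a b).map (fun r => w.dropLast ++ r :: w'.tail)
  | _, _ => none

theorem wfuse_concat_cons {S : Type*} (f : S → S → Option S) (u : List S) (a b : S)
    (v : List S) :
    wfuse f (u ++ [a]) (b :: v) = (f a b).map (fun r => u ++ r :: v) := by
  simp [wfuse]

theorem map_bind_aux {S : Type*} (o : Option S) (g : S → Option S) (h : S → List S) :
    o.bind (fun x => (g x).map h) = (o.bind g).map h := by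
  cases o <;> simp

/-- The induced fusion on the free monoid over a fusion set is associative. -/
theorem wordFusion_assoc {S : Type*} (f : S → S → Option S) (c : S → S)
    (hassoc : ∀ s t r : S, (f s t).bind (fun x => f x r) = (f t r).bind (fun x => f s x))
    (hinv : ∀ s : S, c (c s) = s)
    (hcompat : ∀ s₁ s₂ s₃ : S, f s₁ s₂ = some (c s₃) ↔ f s₂ s₃ = some (c s₁)) :
    ∀ w₁ w₂ w₃ : List S, w₁ ≠ [] → w₂ ≠ [] → w₃ ≠ [] →
      (wfuse f w₁ w₂).bind (fun x => wfuse f x w₃) =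
      (wfuse f w₂ w₃).bind (fun x => wfuse f w₁ x) := by
  intro w₁ w₂ w₃ h1 h2 h3
  obtain ⟨u, a, rfl⟩ := w₁.eq_nil_or_concat.resolve_left h1
  obtain ⟨e, t, rfl⟩ := List.exists_cons_of_ne_nil h3
  obtain ⟨b, v, rfl⟩ := List.exists_cons_of_ne_nil h2
  simp only [List.concat_eq_append] at *
  rcases eq_or_ne v [] with rfl | hv
  · -- w₂ = [b]
    have bm : ∀ (o : Option S) (g : S → List S) (h : List S → Option (List S)),
        (o.map g).bind h = o.bind (fun x => h (g x)) := by
      intro o g h; cases o <;> simp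
    rw [wfuse_concat_cons]
    rw [show wfuse f [b] (e :: t) = (f b e).map (fun r => r :: t) from
      wfuse_concat_cons f [] b e t]
    rw [bm, bm]
    have L : (f a b).bind (fun x => wfuse f (u ++ [x]) (e :: t)) =
        ((f a b).bind (fun x => f x e)).map (fun r => u ++ r :: t) := by
      rw [← map_bind_aux]
      congr 1; funext x
      simpa using wfuse_concat_cons f u x e t
    have R : (f b e).bind (fun y => wfuse f (u ++ [a]) (y :: t)) =
        ((f b e).bind (fun y => f a y)).map (fun r => u ++ r :: t) := by
      rw [← map_bind_aux]
      congr 1; funext y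
      simpa using wfuse_concat_cons f u a y t
    rw [L, R, hassoc]
  · -- w₂ = b :: v, v nonempty
    have bm : ∀ (o : Option S) (g : S → List S) (h : List S → Option (List S)),
        (o.map g).bind h = o.bind (fun x => h (g x)) := by
      intro o g h; cases o <;> simp
    obtain ⟨m, d, hmd⟩ := v.eq_nil_or_concat.resolve_left hv
    simp only [List.concat_eq_append] at hmd
    subst hmd
    rw [wfuse_concat_cons]
    rw [show wfuse f (b :: (m ++ [d])) (e :: t)
        = (f d e).map (fun r => (b :: m) ++ r :: t) from by
      simpa using wfuse_concat_cons f (b :: m) d e t]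
    rw [bm, bm]
    have L : (f a b).bind (fun x => wfuse f (u ++ x :: (m ++ [d])) (e :: t)) =
        (f a b).bind (fun x => (f d e).map fun r => u ++ x :: m ++ r :: t) := by
      congr 1; funext x
      simpa using wfuse_concat_cons f (u ++ x :: m) d e t
    have R : (f d e).bind (fun y => wfuse f (u ++ [a]) (b :: m ++ y :: t)) =
        (f d e).bind (fun y => (f a b).map fun r => u ++ r :: (m ++ y :: t)) := by
      congr 1; funext y
      simpa using wfuse_concat_cons f u a b (m ++ y :: t)
    rw [L, R]
    cases f a b <;> cases f d e <;> simp
end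

section
/- Let S be a fusion set and ℤM the free fusion ring over S, i.e. the free ℤ-module with basis {a_w : w ∈ M} where M is the free monoid over S, with multiplication a_w · a_{w'} = Σ_{w = xy, w' = ȳz} (a_{xz} + a_{x·z}), where a_{x·z} is omitted when the fusion x·z is empty. Then ℤM is the free associative unital ℤ-algebra on the generators {a_s : s ∈ S}; in particular the monomials a_{s₁} ⋯ a_{s_k} (k ∈ ℕ, sᵢ ∈ S) form a ℤ-basis of ℤM. -/
/-- Conjugation of a word: reverse the word and conjugate each letter. -/
def wconj {S : Type*} (c : S → S) (w : List S) : List S :=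
  (w.map c).reverse

/-!
Reading off the terms `n = 0` and `n = 1` of the multiplication rule gives
`a_s a_{t w} = a_{s t w} + a_{(s·t) w} + [t = s̄] a_w`, so left multiplication by a generator
raises the length of a word by one, up to shorter words. By induction on `k`, the monomial
`a_{s₁} ⋯ a_{s_k}` is `a_{s₁ ⋯ s_k}` plus a combination of basis vectors of length `< k`.
A family that is unitriangular in this sense with respect to a basis graded by length is again
a basis, and the lift from the free algebra maps its monomial basis onto it.
-/

open Submodule Set

namespace Module.Basis

variable {ι K M : Type*} [Ring K] [AddCommGroup M] [Module K M] (b : Basis ι K M) (d : ι → ℕ)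

def spanDegreeLT (n : ℕ) : Submodule K M :=
  span K (b '' {i | d i < n})

variable {b d}

lemma spanDegreeLT_mono {m n : ℕ} (h : m ≤ n) : b.spanDegreeLT d m ≤ b.spanDegreeLT d n :=
  span_mono (image_mono fun _ hi => lt_of_lt_of_le hi h)

lemma mem_spanDegreeLT {i : ι} {n : ℕ} (h : d i < n) : b i ∈ b.spanDegreeLT d n :=
  subset_span ⟨i, h, rfl⟩

lemma repr_eq_zero_of_mem_spanDegreeLT {x : M} {n : ℕ} (hx : x ∈ b.spanDegreeLT d n) {i : ι}
    (hi : n ≤ d i) : b.repr x i = 0 :=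
  Finsupp.notMem_support_iff.mp fun h => (b.mem_span_image.mp hx h).not_ge hi

variable {v : ι → M} (hv : ∀ i, v i - b i ∈ b.spanDegreeLT d (d i))
include hv

lemma repr_eq_of_sub_mem_spanDegreeLT {i j : ι} (hij : d i ≤ d j) :
    b.repr (v i) j = Finsupp.single i 1 j := by
  rw [← sub_add_cancel (v i) (b i), map_add, Finsupp.add_apply,
    repr_eq_zero_of_mem_spanDegreeLT (hv i) hij, zero_add, repr_self]

theorem linearIndependent_of_sub_mem_spanDegreeLT : LinearIndependent K v := by
  rw [linearIndependent_iff]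
  intro l hl
  by_contra hne
  obtain ⟨j, hj, hmax⟩ := l.support.exists_max_image d (Finsupp.support_nonempty_iff.mpr hne)
  have hcoeff : b.repr (Finsupp.linearCombination K v l) j = l j := by
    rw [Finsupp.linearCombination_apply, Finsupp.sum, map_sum, Finsupp.finsetSum_apply,
      Finset.sum_eq_single_of_mem j hj]
    · simp [repr_eq_of_sub_mem_spanDegreeLT hv le_rfl]
    · intro i hi hij
      simp [repr_eq_of_sub_mem_spanDegreeLT hv (hmax i hi), hij]
  rw [hl, map_zero, Finsupp.zero_apply] at hcoeff
  exact Finsupp.mem_support_iff.mp hj hcoeff.symm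

theorem span_range_eq_top_of_sub_mem_spanDegreeLT : span K (range v) = ⊤ := by
  have hb (n : ℕ) : ∀ i, d i = n → b i ∈ span K (range v) := by
    induction n using Nat.strong_induction_on with
    | _ n ih =>
      rintro i rfl
      have hlower : b.spanDegreeLT d (d i) ≤ span K (range v) :=
        span_le.mpr <| by rintro _ ⟨j, hj, rfl⟩; exact ih _ hj j rfl
      rw [← sub_sub_cancel (v i) (b i)]
      exact sub_mem (subset_span ⟨i, rfl⟩) (hlower (hv i))
  rw [eq_top_iff, ← b.span_eq, span_le]
  rintro _ ⟨i, rfl⟩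
  exact hb _ i rfl

end Module.Basis

namespace FreeFusionRing

open Module.Basis

variable {S K R : Type*} [Ring K] [Ring R] [Module K R] {b : Module.Basis (List S) K R}

section MultiplicationRule

variable [DecidableEq S] {f : S → S → Option S} {c : S → S}
  (hmul : ∀ w w' : List S, (b w : R) * b w' =
    ∑ n ∈ Finset.range (min w.length w'.length + 1),
      if w'.take n = wconj c (w.drop (w.length - n)) then
        (b (w.take (w.length - n) ++ w'.drop n) +
          ((wfuse f (w.take (w.length - n)) (w'.drop n)).elim 0 (fun u => (b u : R))))
      else 0)
include hmul

lemma single_mul_cons (s t : S) (w : List S) :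
    b [s] * b (t :: w) =
      b (s :: t :: w) + (f s t).elim 0 (fun r => b (r :: w)) + if t = c s then b w else 0 := by
  rw [hmul]
  simp [Finset.sum_range_succ, wconj, wfuse, Function.comp_def]

lemma single_mul_sub_mem_spanDegreeLT (hone : b [] = 1) (s : S) (w : List S) :
    b [s] * b w - b (s :: w) ∈ b.spanDegreeLT List.length (w.length + 1) := by
  rcases w with _ | ⟨t, w⟩
  · simp [hone]
  rw [single_mul_cons hmul, add_assoc, add_sub_cancel_left]
  refine add_mem ?_ ?_
  · cases f s t
    · exact zero_mem _
    · exact mem_spanDegreeLT (by simp)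
  · split_ifs
    · exact mem_spanDegreeLT (by simp)
    · exact zero_mem _

end MultiplicationRule

variable [SMulCommClass K R R]
  (htri : ∀ s w, b [s] * b w - b (s :: w) ∈ b.spanDegreeLT List.length (w.length + 1))
include htri

lemma single_mul_mem_spanDegreeLT_succ (s : S) {x : R} {n : ℕ}
    (hx : x ∈ b.spanDegreeLT List.length n) :
    b [s] * x ∈ b.spanDegreeLT List.length (n + 1) := by
  induction hx using span_induction with
  | mem y hy =>
    obtain ⟨w, hw : w.length < n, rfl⟩ := hy
    rw [← sub_add_cancel (b [s] * b w) (b (s :: w))]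
    exact add_mem (spanDegreeLT_mono (by omega) (htri s w))
      (mem_spanDegreeLT (by simp only [List.length_cons]; omega))
  | zero => simp
  | add y z _ _ hy hz => rw [mul_add]; exact add_mem hy hz
  | smul a y _ hy => rw [mul_smul_comm]; exact smul_mem _ a hy

lemma list_prod_sub_mem_spanDegreeLT (hone : b [] = 1) (w : List S) :
    (w.map fun s => b [s]).prod - b w ∈ b.spanDegreeLT List.length w.length := by
  induction w with
  | nil => simp [hone]
  | cons s w ih =>
    have hsplit : ((s :: w).map fun s => b [s]).prod - b (s :: w) =
        b [s] * ((w.map fun s => b [s]).prod - b w) + (b [s] * b w - b (s :: w)) := by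
      simp only [List.map_cons, List.prod_cons]
      noncomm_ring
    rw [hsplit]
    exact add_mem (single_mul_mem_spanDegreeLT_succ htri s ih) (htri s w)

end FreeFusionRing

lemma FreeAlgebra.span_range_list_prod_ι (K X : Type*) [CommRing K] :
    span K (range fun w : List X => (w.map (ι K)).prod) = ⊤ := by
  have h (w : FreeMonoid X) : basisFreeMonoid K X w = FreeMonoid.lift (ι K) w := by
    simp [basisFreeMonoid, equivMonoidAlgebraFreeMonoid]
  rw [← (basisFreeMonoid K X).span_eq]
  congr 1
  ext x
  simp only [mem_range, h, FreeMonoid.lift_apply]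
  exact FreeMonoid.toList.exists_congr_left

theorem freeFusionRing_free_general {S : Type*} [DecidableEq S]
    (f : S → S → Option S) (c : S → S)
    {R : Type*} [Ring R] (b : Module.Basis (List S) ℤ R)
    (hone : (b [] : R) = 1)
    (hmul : ∀ w w' : List S, (b w : R) * b w' =
      ∑ n ∈ Finset.range (min w.length w'.length + 1),
        if w'.take n = wconj c (w.drop (w.length - n)) then
          (b (w.take (w.length - n) ++ w'.drop n) +
            ((wfuse f (w.take (w.length - n)) (w'.drop n)).elim 0 (fun u => (b u : R))))
        else 0) :
    Function.Bijective ⇑(FreeAlgebra.lift ℤ (fun s : S => (b [s] : R))) ∧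
    LinearIndependent ℤ (fun w : List S => ((w.map fun s => (b [s] : R)).prod)) ∧
    Submodule.span ℤ (Set.range fun w : List S => ((w.map fun s => (b [s] : R)).prod)) = ⊤ := by
  have htri := FreeFusionRing.single_mul_sub_mem_spanDegreeLT hmul hone
  have hsub := FreeFusionRing.list_prod_sub_mem_spanDegreeLT htri hone
  have hli := Module.Basis.linearIndependent_of_sub_mem_spanDegreeLT hsub
  have hspan := Module.Basis.span_range_eq_top_of_sub_mem_spanDegreeLT hsub
  have hmonomial : ⇑(FreeAlgebra.lift ℤ fun s : S => b [s]) ∘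
      (fun w : List S => (w.map (FreeAlgebra.ι ℤ)).prod) = fun w => (w.map fun s => b [s]).prod := by
    ext w
    simp [map_list_prod, Function.comp_def]
  refine ⟨?_, hli, hspan⟩
  rw [← hmonomial] at hli hspan
  exact LinearMap.bijective_of_linearIndependent_of_span_eq_top
    (f := (FreeAlgebra.lift ℤ fun s : S => b [s]).toLinearMap)
    (FreeAlgebra.span_range_list_prod_ι ℤ S) hli hspan

/-- The free fusion ring over a fusion set `S` is the free associative unital
ℤ-algebra on the generators `a_s`, `s ∈ S`; in particular the monomials
`a_{s₁} ⋯ a_{s_k}` form a ℤ-basis. -/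
theorem freeFusionRing_free {S : Type*} [DecidableEq S]
    (f : S → S → Option S) (c : S → S)
    (hassoc : ∀ s t r : S, (f s t).bind (fun x => f x r) = (f t r).bind (fun x => f s x))
    (hinv : ∀ s : S, c (c s) = s)
    (hcompat : ∀ s₁ s₂ s₃ : S, f s₁ s₂ = some (c s₃) ↔ f s₂ s₃ = some (c s₁))
    {R : Type*} [Ring R] (b : Module.Basis (List S) ℤ R)
    (hone : (b [] : R) = 1)
    (hmul : ∀ w w' : List S, (b w : R) * b w' =
      ∑ n ∈ Finset.range (min w.length w'.length + 1),
        if w'.take n = wconj c (w.drop (w.length - n)) then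
          (b (w.take (w.length - n) ++ w'.drop n) +
            ((wfuse f (w.take (w.length - n)) (w'.drop n)).elim 0 (fun u => (b u : R))))
        else 0) :
    Function.Bijective ⇑(FreeAlgebra.lift ℤ (fun s : S => (b [s] : R))) ∧
    LinearIndependent ℤ (fun w : List S => ((w.map fun s => (b [s] : R)).prod)) ∧
    Submodule.span ℤ (Set.range fun w : List S => ((w.map fun s => (b [s] : R)).prod)) = ⊤ :=
  freeFusionRing_free_general f c b hone hmul
end

section
/- Let S be a fusion set and ℤM the free fusion ring over S. For each word w ∈ M of length k there exist integers C^v_w for words v of length < k such that a_{s₁} ⋯ a_{s_k} = a_{s₁…s_k} + Σ_{|v| < k} C^v_{s₁…s_k} a_v. Consequently the set {a_{s₁} ⋯ a_{s_k} : k ∈ ℕ, sᵢ ∈ S} is ℤ-linearly independent in ℤM. -/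
/-!
Multiplying a basis element `a_v` on the left by a letter `a_s` gives `a_{sv}` plus terms of
length at most `|v|` (the fusion term and the contraction term of the product formula). By
induction on `w`, the monomial `a_{s₁} ⋯ a_{s_k}` is therefore `a_w` modulo the span of shorter
basis words, so the monomials are unitriangular with respect to the basis, ordered by length,
and hence linearly independent.
-/

open Submodule

namespace Module.Basis

variable {ι κ R M : Type*} [LinearOrder κ] [Ring R] [AddCommGroup M] [Module R M]

theorem repr_apply_eq_of_sub_mem_span (b : Basis ι R M) (deg : ι → κ) {i j : ι} {x : M}
    (hx : x - b i ∈ span R (b '' {k | deg k < deg i})) (hij : deg i ≤ deg j) :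
    b.repr x j = b.repr (b i) j := by
  have hj : j ∉ (b.repr (x - b i)).support := fun hj =>
    (not_lt_of_ge hij) (b.mem_span_image.1 hx hj)
  rwa [Finsupp.notMem_support_iff, map_sub, Finsupp.sub_apply, sub_eq_zero] at hj

theorem linearIndependent_of_sub_mem_span_lt (b : Basis ι R M) (deg : ι → κ) {v : ι → M}
    (hv : ∀ i, v i - b i ∈ span R (b '' {k | deg k < deg i})) : LinearIndependent R v := by
  rw [linearIndependent_iff]
  intro l hl
  by_contra hne
  obtain ⟨j, hj, hmax⟩ := l.support.exists_max_image deg (Finsupp.support_nonempty_iff.2 hne)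
  have hcoord : b.repr (Finsupp.linearCombination R v l) j = l j :=
    calc b.repr (Finsupp.linearCombination R v l) j
        = ∑ i ∈ l.support, l i * b.repr (v i) j := by
          simp [Finsupp.linearCombination_apply, Finsupp.sum, Finsupp.finsetSum_apply]
      _ = ∑ i ∈ l.support, l i * b.repr (b i) j := Finset.sum_congr rfl fun i hi => by
          rw [b.repr_apply_eq_of_sub_mem_span deg (hv i) (hmax i hi)]
      _ = l j := by
          rw [Finset.sum_eq_single_of_mem j hj fun i _ hij => by
            rw [b.repr_self, Finsupp.single_eq_of_ne' hij, mul_zero]]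
          simp
  rw [hl, map_zero, Finsupp.coe_zero, Pi.zero_apply] at hcoord
  exact Finsupp.mem_support_iff.1 hj hcoord.symm

end Module.Basis

section FreeFusion

variable {S : Type*} [DecidableEq S] (f : S → S → Option S) (c : S → S)
  {R : Type*} [Ring R] (b : Module.Basis (List S) ℤ R)

/-- The product rule of `ℤM` on the basis `b`: the summand `n` is the splitting `w = xy`,
`w' = ȳz` with `|y| = n`. -/
def IsFreeFusionBasis : Prop :=
  ∀ w w' : List S, (b w : R) * b w' =
      ∑ n ∈ Finset.range (min w.length w'.length + 1),
        if w'.take n = wconj c (w.drop (w.length - n)) then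
          (b (w.take (w.length - n) ++ w'.drop n) +
            ((wfuse f (w.take (w.length - n)) (w'.drop n)).elim 0 (fun u => (b u : R))))
        else 0

variable {f c b}

theorem IsFreeFusionBasis.letter_mul_nil (hb : IsFreeFusionBasis f c b) (s : S) :
    b [s] * b [] = b [s] := by
  simp [hb [s], wconj, wfuse]

theorem IsFreeFusionBasis.letter_mul_cons (hb : IsFreeFusionBasis f c b) (s h : S) (t : List S) :
    b [s] * b (h :: t) = b (s :: h :: t) + (f s h).elim 0 (fun r => b (r :: t)) +
      if h = c s then b t else 0 := by
  cases hf : f s h <;>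
  simp [hb [s], Finset.sum_range_succ, wconj, wfuse, hf]

theorem IsFreeFusionBasis.letter_mul_sub_mem_span (hb : IsFreeFusionBasis f c b) (s : S)
    (v : List S) : b [s] * b v - b (s :: v) ∈ span ℤ (b '' {u | u.length < v.length + 1}) := by
  cases v with
  | nil => simp [hb.letter_mul_nil]
  | cons h t =>
    have hshort : ∀ u : List S, u.length ≤ t.length + 1 →
        b u ∈ span ℤ (b '' {u | u.length < (h :: t).length + 1}) := fun u hu =>
      subset_span ⟨u, Nat.lt_succ_of_le hu, rfl⟩
    rw [hb.letter_mul_cons, add_assoc, add_sub_cancel_left]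
    refine add_mem ?_ ?_
    · cases f s h with
      | none => exact zero_mem _
      | some r => exact hshort (r :: t) le_rfl
    · split_ifs
      · exact hshort t (Nat.le_succ _)
      · exact zero_mem _

theorem IsFreeFusionBasis.letter_mul_mem_span (hb : IsFreeFusionBasis f c b) (s : S) {k : ℕ}
    {x : R} (hx : x ∈ span ℤ (b '' {u | u.length < k})) :
    b [s] * x ∈ span ℤ (b '' {u | u.length < k + 1}) := by
  have hle : span ℤ (b '' {u | u.length < k}) ≤
      (span ℤ (b '' {u | u.length < k + 1})).comap (LinearMap.mulLeft ℤ (b [s])) := by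
    rw [span_le]
    rintro _ ⟨u, hu, rfl⟩
    have hlt : u.length + 1 ≤ k := hu
    have hmono : span ℤ (b '' {u' | u'.length < u.length + 1}) ≤
        span ℤ (b '' {u | u.length < k + 1}) :=
      span_mono (Set.image_mono fun u' (hu' : u'.length < u.length + 1) =>
        show u'.length < k + 1 by omega)
    rw [SetLike.mem_coe, mem_comap, LinearMap.mulLeft_apply, ← sub_add_cancel (b [s] * b u)]
    exact add_mem (hmono (hb.letter_mul_sub_mem_span s u))
      (subset_span ⟨s :: u, by simpa using hlt, rfl⟩)
  exact hle hx

theorem IsFreeFusionBasis.prod_map_sub_mem_span (hb : IsFreeFusionBasis f c b)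
    (hone : b [] = 1) (w : List S) :
    (w.map fun s => b [s]).prod - b w ∈ span ℤ (b '' {u | u.length < w.length}) := by
  induction w with
  | nil => simp [hone]
  | cons s w ih =>
    have hsplit : ((s :: w).map fun s => b [s]).prod - b (s :: w) =
        (b [s] * b w - b (s :: w)) + b [s] * ((w.map fun s => b [s]).prod - b w) := by
      simp only [List.map_cons, List.prod_cons, mul_sub]; abel
    rw [hsplit]
    exact add_mem (hb.letter_mul_sub_mem_span s w) (hb.letter_mul_mem_span s ih)

end FreeFusion

theorem freeFusionRing_monomials_general {S : Type*} [DecidableEq S]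
    (f : S → S → Option S) (c : S → S)
    {R : Type*} [Ring R] (b : Module.Basis (List S) ℤ R)
    (hone : (b [] : R) = 1)
    (hmul : ∀ w w' : List S, (b w : R) * b w' =
      ∑ n ∈ Finset.range (min w.length w'.length + 1),
        if w'.take n = wconj c (w.drop (w.length - n)) then
          (b (w.take (w.length - n) ++ w'.drop n) +
            ((wfuse f (w.take (w.length - n)) (w'.drop n)).elim 0 (fun u => (b u : R))))
        else 0) :
    (∀ w : List S, ∃ C : (List S) →₀ ℤ,
      (∀ v ∈ C.support, v.length < w.length) ∧
      ((w.map fun s => (b [s] : R)).prod = b w + C.sum fun v n => n • (b v : R))) ∧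
    LinearIndependent ℤ (fun w : List S => ((w.map fun s => (b [s] : R)).prod)) := by
  have hmono := IsFreeFusionBasis.prod_map_sub_mem_span hmul hone
  refine ⟨fun w => ?_, b.linearIndependent_of_sub_mem_span_lt List.length hmono⟩
  obtain ⟨C, hC, hCw⟩ := (Finsupp.mem_span_image_iff_linearCombination ℤ).1 (hmono w)
  refine ⟨C, fun v hv => (Finsupp.mem_supported _ _).1 hC hv, ?_⟩
  rw [← Finsupp.linearCombination_apply, hCw]
  abel

/-- In a free fusion ring over `S`, the monomial `a_{s₁} ⋯ a_{s_k}` equals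
`a_{s₁…s_k}` plus a ℤ-linear combination of basis elements indexed by strictly
shorter words; consequently the monomials are ℤ-linearly independent. -/
theorem freeFusionRing_monomials {S : Type*} [DecidableEq S]
    (f : S → S → Option S) (c : S → S)
    (hassoc : ∀ s t r : S, (f s t).bind (fun x => f x r) = (f t r).bind (fun x => f s x))
    (hinv : ∀ s : S, c (c s) = s)
    (hcompat : ∀ s₁ s₂ s₃ : S, f s₁ s₂ = some (c s₃) ↔ f s₂ s₃ = some (c s₁))
    {R : Type*} [Ring R] (b : Module.Basis (List S) ℤ R)
    (hone : (b [] : R) = 1)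
    (hmul : ∀ w w' : List S, (b w : R) * b w' =
      ∑ n ∈ Finset.range (min w.length w'.length + 1),
        if w'.take n = wconj c (w.drop (w.length - n)) then
          (b (w.take (w.length - n) ++ w'.drop n) +
            ((wfuse f (w.take (w.length - n)) (w'.drop n)).elim 0 (fun u => (b u : R))))
        else 0) :
    (∀ w : List S, ∃ C : (List S) →₀ ℤ,
      (∀ v ∈ C.support, v.length < w.length) ∧
      ((w.map fun s => (b [s] : R)).prod = b w + C.sum fun v n => n • (b v : R))) ∧
    LinearIndependent ℤ (fun w : List S => ((w.map fun s => (b [s] : R)).prod)) :=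
  freeFusionRing_monomials_general f c b hone hmul
end

section
/- In a free fusion ring ℤM over a nonempty fusion set S, every basis element a_w with w ≠ 1 (the empty word) satisfies a_w · a_{w̄} ≠ 1. In particular, the group of invertible basis elements among the a_w consists only of a_∅ = 1. -/
/-!
The structure constants of the free fusion ring are nonnegative, and the product `a_w a_w'`
always contains the concatenation `a_{ww'}` (the term with no cancellation) with coefficient
at least one. Hence `a_w a_w̄` has a positive coefficient at the nonempty word `w w̄`, whereas
`1 = a_∅` has coefficient zero there.
-/

namespace Module.Basis

variable {ι K M : Type*} [Semiring K] [PartialOrder K] [IsOrderedRing K]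
  [AddCommMonoid M] [Module K M] (b : Basis ι K M)

def nonnegCone : AddSubmonoid M where
  carrier := {x | ∀ i, 0 ≤ b.repr x i}
  zero_mem' := by simp
  add_mem' hx hy i := by simpa using add_nonneg (hx i) (hy i)

theorem self_mem_nonnegCone (i : ι) : b i ∈ b.nonnegCone := by
  classical
  intro j
  rw [repr_self, Finsupp.single_apply]
  split_ifs <;> simp

theorem optionElim_mem_nonnegCone (o : Option ι) :
    o.elim 0 (fun i => b i) ∈ b.nonnegCone := by
  cases o with
  | none => exact b.nonnegCone.zero_mem
  | some i => exact b.self_mem_nonnegCone i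

theorem add_ne_of_mem_nonnegCone [Nontrivial K] {x : M} (hx : x ∈ b.nonnegCone) {i j : ι}
    (hij : i ≠ j) : b i + x ≠ b j := by
  intro h
  have hcoord := congrArg (fun y => b.repr y i) h
  simp only [map_add, Finsupp.add_apply, repr_self, Finsupp.single_eq_same,
    Finsupp.single_eq_of_ne hij] at hcoord
  exact (add_pos_of_pos_of_nonneg zero_lt_one (hx i)).ne' hcoord

end Module.Basis

section FreeFusionRing

variable {S : Type*} [DecidableEq S] (f : S → S → Option S) (c : S → S)
  {R : Type*} [Ring R] (b : Module.Basis (List S) ℤ R)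

/-- The term `a_{xz} + a_{x·z}` of the product rule, for `w = xy`, `w' = ȳz` with `|y| = n`. -/
noncomputable def fusionSummand (w w' : List S) (n : ℕ) : R :=
  if w'.take n = wconj c (w.drop (w.length - n)) then
    (b (w.take (w.length - n) ++ w'.drop n) +
      ((wfuse f (w.take (w.length - n)) (w'.drop n)).elim 0 (fun u => (b u : R))))
  else 0

theorem fusionSummand_mem_nonnegCone (w w' : List S) (n : ℕ) :
    fusionSummand f c b w w' n ∈ b.nonnegCone := by
  unfold fusionSummand
  split_ifs
  · exact add_mem (b.self_mem_nonnegCone _) (b.optionElim_mem_nonnegCone _)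
  · exact zero_mem _

theorem fusionSummand_zero (w w' : List S) :
    fusionSummand f c b w w' 0 =
      b (w ++ w') + (wfuse f w w').elim 0 (fun u => (b u : R)) := by
  simp [fusionSummand, wconj]

theorem exists_mul_eq_concat_add
    (hmul : ∀ w w' : List S, (b w : R) * b w' =
      ∑ n ∈ Finset.range (min w.length w'.length + 1), fusionSummand f c b w w' n)
    (w w' : List S) : ∃ x ∈ b.nonnegCone, b w * b w' = b (w ++ w') + x := by
  refine ⟨(wfuse f w w').elim 0 (fun u => (b u : R)) +
      ∑ n ∈ Finset.range (min w.length w'.length), fusionSummand f c b w w' (n + 1),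
    add_mem (b.optionElim_mem_nonnegCone _)
      (sum_mem fun n _ => fusionSummand_mem_nonnegCone f c b w w' (n + 1)), ?_⟩
  rw [hmul, Finset.sum_range_succ', fusionSummand_zero, add_comm, add_assoc]

end FreeFusionRing

theorem freeFusionRing_no_nontrivial_units_general {S : Type*} [DecidableEq S]
    (f : S → S → Option S) (c : S → S)
    {R : Type*} [Ring R] (b : Module.Basis (List S) ℤ R)
    (hone : (b [] : R) = 1)
    (hmul : ∀ w w' : List S, (b w : R) * b w' =
      ∑ n ∈ Finset.range (min w.length w'.length + 1),
        if w'.take n = wconj c (w.drop (w.length - n)) then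
          (b (w.take (w.length - n) ++ w'.drop n) +
            ((wfuse f (w.take (w.length - n)) (w'.drop n)).elim 0 (fun u => (b u : R))))
        else 0) :
    (∀ w : List S, w ≠ [] → (b w : R) * b (wconj c w) ≠ 1) ∧
    (∀ w : List S, (b w : R) * b (wconj c w) = 1 → w = []) := by
  have key (w : List S) (hw : w ≠ []) : (b w : R) * b (wconj c w) ≠ 1 := by
    obtain ⟨x, hx, hprod⟩ := exists_mul_eq_concat_add f c b hmul w (wconj c w)
    rw [hprod, ← hone]
    exact b.add_ne_of_mem_nonnegCone hx (by simp [hw])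
  exact ⟨key, fun w h => by_contra fun hw => key w hw h⟩

/-- In a free fusion ring over a nonempty fusion set, no basis element `a_w` with
`w` a nonempty word satisfies `a_w ⬝ a_{w̄} = 1`; in particular among the basis
elements only `a_∅ = 1` is invertible in this way. -/
theorem freeFusionRing_no_nontrivial_units {S : Type*} [DecidableEq S] [Nonempty S]
    (f : S → S → Option S) (c : S → S)
    (hassoc : ∀ s t r : S, (f s t).bind (fun x => f x r) = (f t r).bind (fun x => f s x))
    (hinv : ∀ s : S, c (c s) = s)
    (hcompat : ∀ s₁ s₂ s₃ : S, f s₁ s₂ = some (c s₃) ↔ f s₂ s₃ = some (c s₁))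
    {R : Type*} [Ring R] (b : Module.Basis (List S) ℤ R)
    (hone : (b [] : R) = 1)
    (hmul : ∀ w w' : List S, (b w : R) * b w' =
      ∑ n ∈ Finset.range (min w.length w'.length + 1),
        if w'.take n = wconj c (w.drop (w.length - n)) then
          (b (w.take (w.length - n) ++ w'.drop n) +
            ((wfuse f (w.take (w.length - n)) (w'.drop n)).elim 0 (fun u => (b u : R))))
        else 0) :
    (∀ w : List S, w ≠ [] → (b w : R) * b (wconj c w) ≠ 1) ∧
    (∀ w : List S, (b w : R) * b (wconj c w) = 1 → w = []) :=
  freeFusionRing_no_nontrivial_units_general f c b hone hmul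
end

section
/- Let A be a unital C*-algebra, n ≥ 1, and let T ∈ Mₙ(ℂ) be a real orthogonal matrix with T(1,0,…,0)ᵗ = (1/√n, …, 1/√n)ᵗ. Then an orthogonal unitary U ∈ Mₙ(A) is bistochastic if and only if TᵗUT is a block matrix with the unit 1 of A in the upper-left (1,1) corner, zeros in the rest of the first row and column, and an orthogonal unitary (n−1)×(n−1) matrix over A in the lower-right block. -/
/-!
Let `S` be `T` viewed in `Mₙ(A)` and `V = SᵗUS`. Since `T` is real orthogonal, `S` is unitary
with `S⋆ = Sᵗ`, and its first column is `c • (1, …, 1)` with `c = 1/√n ≠ 0`. The row sums of `U`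
are `1` iff `U` fixes `(1, …, 1)`, i.e. iff `V` fixes `e₀`, i.e. iff the first column of `V` is
`e₀`; dually, with row vectors, for the column sums and the first row of `V`. The remaining
conditions hold automatically: `V` is unitary, so once its first row and column are `e₀` its
lower-right block is unitary, and the entries of `V` are self-adjoint because those of `U` are
and the entries of `S` are real scalars, hence central and self-adjoint.
-/

open Matrix

namespace Matrix

theorem col_eq_single_and_row_eq_single_iff {m R : Type*} [DecidableEq m] [Zero R] [One R]
    {V : Matrix m m R} (i : m) :
    V.col i = Pi.single i 1 ∧ V.row i = Pi.single i 1 ↔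
      V i i = 1 ∧ ∀ j, j ≠ i → V i j = 0 ∧ V j i = 0 := by
  simp only [funext_iff, col_apply, row_apply, Pi.single_apply]
  constructor
  · rintro ⟨hcol, hrow⟩
    exact ⟨by simpa using hcol i,
      fun j hj => ⟨by simpa [hj] using hrow j, by simpa [hj] using hcol j⟩⟩
  · rintro ⟨hii, hoff⟩
    constructor <;> intro j <;> by_cases hj : j = i <;> simp [hj, hii, hoff]

section Semiring

variable {m R : Type*} [Fintype m] [Semiring R]

theorem mulVec_one_eq_one_iff (U : Matrix m m R) : U *ᵥ 1 = 1 ↔ ∀ i, ∑ j, U i j = 1 := by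
  simp [funext_iff, mulVec, dotProduct]

theorem one_vecMul_eq_one_iff (U : Matrix m m R) : 1 ᵥ* U = 1 ↔ ∀ j, ∑ i, U i j = 1 := by
  simp [funext_iff, vecMul, dotProduct]

variable [DecidableEq m] {M N U : Matrix m m R}

theorem mulVec_eq_self_iff_conj (hNM : N * M = 1) (hMN : M * N = 1) (v : m → R) :
    U *ᵥ (M *ᵥ v) = M *ᵥ v ↔ (N * U * M) *ᵥ v = v := by
  constructor
  · intro h
    rw [← mulVec_mulVec, ← mulVec_mulVec, h, mulVec_mulVec, hNM, one_mulVec]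
  · intro h
    calc U *ᵥ (M *ᵥ v) = M *ᵥ ((N * U * M) *ᵥ v) := by
          rw [mulVec_mulVec, mulVec_mulVec, ← mul_assoc, ← mul_assoc, hMN, one_mul]
      _ = M *ᵥ v := by rw [h]

theorem vecMul_eq_self_iff_conj (hNM : N * M = 1) (hMN : M * N = 1) (v : m → R) :
    (v ᵥ* N) ᵥ* U = v ᵥ* N ↔ v ᵥ* (N * U * M) = v := by
  constructor
  · intro h
    rw [← vecMul_vecMul, ← vecMul_vecMul, h, vecMul_vecMul, hNM, vecMul_one]
  · intro h
    calc (v ᵥ* N) ᵥ* U = (v ᵥ* (N * U * M)) ᵥ* N := by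
          rw [vecMul_vecMul, vecMul_vecMul, mul_assoc, hMN, mul_one]
      _ = v ᵥ* N := by rw [h]

end Semiring

theorem row_col_sums_eq_one_iff_conj_col_row_eq_single {𝕜 A m : Type*} [Field 𝕜] [Ring A]
    [Algebra 𝕜 A] [Fintype m] [DecidableEq m] {S U : Matrix m m A} (hSS : Sᵀ * S = 1)
    (hSS' : S * Sᵀ = 1) {c : 𝕜} (hc : c ≠ 0) {k : m} (hS : S.col k = c • 1) :
    ((∀ i, ∑ j, U i j = 1) ∧ ∀ j, ∑ i, U i j = 1) ↔
      (Sᵀ * U * S).col k = Pi.single k 1 ∧ (Sᵀ * U * S).row k = Pi.single k 1 := by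
  have hScol : S *ᵥ Pi.single k 1 = c • 1 := by rw [mulVec_single_one, hS]
  have hSrow : Pi.single k 1 ᵥ* Sᵀ = c • 1 := by rw [single_one_vecMul, row_transpose, hS]
  rw [← mulVec_one_eq_one_iff, ← one_vecMul_eq_one_iff, ← smul_right_inj hc, ← mulVec_smul,
    ← hScol, mulVec_eq_self_iff_conj hSS hSS', ← smul_right_inj hc (m₁ := 1 ᵥ* U),
    ← smul_vecMul, ← hSrow, vecMul_eq_self_iff_conj hSS hSS', mulVec_single_one,
    single_one_vecMul]

section StarRing

variable {R : Type*} [Semiring R] [StarRing R] {n : ℕ} {V : Matrix (Fin (n + 1)) (Fin (n + 1)) R}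

theorem submatrix_succ_mul_conjTranspose (hV : ∀ i : Fin n, V i.succ 0 = 0) :
    V.submatrix Fin.succ Fin.succ * (V.submatrix Fin.succ Fin.succ)ᴴ =
      (V * Vᴴ).submatrix Fin.succ Fin.succ := by
  ext i j
  simp [mul_apply, Fin.sum_univ_succ (n := n), hV]

theorem conjTranspose_mul_submatrix_succ (hV : ∀ j : Fin n, V 0 j.succ = 0) :
    (V.submatrix Fin.succ Fin.succ)ᴴ * V.submatrix Fin.succ Fin.succ =
      (Vᴴ * V).submatrix Fin.succ Fin.succ := by
  ext i j
  simp [mul_apply, Fin.sum_univ_succ (n := n), hV]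

theorem submatrix_succ_mem_unitary (hV : V ∈ unitary _) (hcol : ∀ i : Fin n, V i.succ 0 = 0)
    (hrow : ∀ j : Fin n, V 0 j.succ = 0) : V.submatrix Fin.succ Fin.succ ∈ unitary _ := by
  rw [Unitary.mem_iff, star_eq_conjTranspose, conjTranspose_mul_submatrix_succ hrow,
    submatrix_succ_mul_conjTranspose hcol, ← star_eq_conjTranspose,
    Unitary.star_mul_self_of_mem hV, Unitary.mul_star_self_of_mem hV,
    submatrix_one _ (Fin.succ_injective _)]
  exact ⟨rfl, rfl⟩

end StarRing

section Algebra

variable {R A : Type*} [CommSemiring R] [Semiring A] [Algebra R A] {m k : Type*} {T : Matrix m k R}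

theorem transpose_map_algebraMap_mul_mul_apply [Fintype m] (U : Matrix m m A) (a b : k) :
    ((T.map (algebraMap R A))ᵀ * U * T.map (algebraMap R A)) a b =
      ∑ j, ∑ i, (T i a * T j b) • U i j := by
  simp only [mul_apply, transpose_apply, map_apply, Finset.sum_mul]
  refine Finset.sum_congr rfl fun j _ => Finset.sum_congr rfl fun i _ => ?_
  rw [mul_assoc, ← Algebra.commutes, ← mul_assoc, ← map_mul, Algebra.smul_def]

variable [StarRing R] [StarRing A] [StarModule R A]

theorem conjTranspose_map_algebraMap (hT : ∀ i j, star (T i j) = T i j) :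
    (T.map (algebraMap R A))ᴴ = (T.map (algebraMap R A))ᵀ := by
  ext i j
  simp [← algebraMap_star_comm, hT]

theorem star_transpose_map_algebraMap_mul_mul_apply [Fintype m] (hT : ∀ i j, star (T i j) = T i j)
    {U : Matrix m m A} (hU : ∀ i j, star (U i j) = U i j) (a b : k) :
    star (((T.map (algebraMap R A))ᵀ * U * T.map (algebraMap R A)) a b) =
      ((T.map (algebraMap R A))ᵀ * U * T.map (algebraMap R A)) a b := by
  simp [transpose_map_algebraMap_mul_mul_apply, star_sum, star_smul, hT, hU]

theorem map_algebraMap_mem_unitary [Fintype m] [DecidableEq m] {T : Matrix m m R}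
    (hT : ∀ i j, star (T i j) = T i j) (hTT : Tᵀ * T = 1) (hTT' : T * Tᵀ = 1) :
    T.map (algebraMap R A) ∈ unitary (Matrix m m A) := by
  rw [Unitary.mem_iff, star_eq_conjTranspose, conjTranspose_map_algebraMap hT, ← transpose_map,
    ← Matrix.map_mul, ← Matrix.map_mul, hTT, hTT', Matrix.map_one _ (map_zero _) (map_one _)]
  exact ⟨rfl, rfl⟩

end Algebra

end Matrix

/-- Let `T ∈ M_{n+1}(ℂ)` be a real orthogonal matrix whose first column is
`(1/√(n+1), …, 1/√(n+1))ᵗ`. An orthogonal unitary `U ∈ M_{n+1}(A)` over a unital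
C*-algebra `A` is bistochastic iff `TᵗUT` is a block matrix with `1` in the
upper-left corner, zeros in the rest of the first row and column, and an
orthogonal unitary `n × n` matrix in the lower-right block. -/
theorem bistochastic_iff_block_form {A : Type*} [CStarAlgebra A]
    {n : ℕ} (T : Matrix (Fin (n + 1)) (Fin (n + 1)) ℂ)
    (hTreal : ∀ i j, (T i j).im = 0)
    (hTorth : T * T.transpose = 1 ∧ T.transpose * T = 1)
    (hTcol : ∀ i, T i 0 = ((1 / Real.sqrt (n + 1) : ℝ) : ℂ))
    (U : Matrix (Fin (n + 1)) (Fin (n + 1)) A)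
    (hsa : ∀ i j, star (U i j) = U i j)
    (hunitary : U * U.conjTranspose = 1 ∧ U.conjTranspose * U = 1) :
    ((∀ i, (∑ j, U i j) = 1) ∧ (∀ j, (∑ i, U i j) = 1)) ↔
      (let V := (T.map (algebraMap ℂ A)).transpose * U * T.map (algebraMap ℂ A)
       V 0 0 = 1 ∧
       (∀ j, j ≠ 0 → V 0 j = 0 ∧ V j 0 = 0) ∧
       (∀ i j, star (V.submatrix Fin.succ Fin.succ i j) = V.submatrix Fin.succ Fin.succ i j) ∧
       V.submatrix Fin.succ Fin.succ * (V.submatrix Fin.succ Fin.succ).conjTranspose = 1 ∧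
       (V.submatrix Fin.succ Fin.succ).conjTranspose * V.submatrix Fin.succ Fin.succ = 1) := by
  set c : ℂ := ((1 / Real.sqrt (n + 1) : ℝ) : ℂ)
  have hc : c ≠ 0 := Complex.ofReal_ne_zero.2 (by positivity)
  have hTstar : ∀ i j, star (T i j) = T i j := fun i j => Complex.conj_eq_iff_im.mpr (hTreal i j)
  set S := T.map (algebraMap ℂ A)
  have hSstar : star S = Sᵀ :=
    (star_eq_conjTranspose S).trans (conjTranspose_map_algebraMap hTstar)
  have hSunitary : S ∈ unitary _ := map_algebraMap_mem_unitary hTstar hTorth.2 hTorth.1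
  have hSS : Sᵀ * S = 1 := hSstar ▸ Unitary.star_mul_self_of_mem hSunitary
  have hSS' : S * Sᵀ = 1 := hSstar ▸ Unitary.mul_star_self_of_mem hSunitary
  have hScol : S.col 0 = c • 1 := by
    ext i; simp [S, hTcol, Algebra.algebraMap_eq_smul_one]
  have hVunitary : Sᵀ * U * S ∈ unitary _ := by
    rw [← hSstar]
    exact mul_mem (mul_mem (Unitary.star_mem hSunitary) ⟨hunitary.2, hunitary.1⟩) hSunitary
  dsimp only
  rw [row_col_sums_eq_one_iff_conj_col_row_eq_single hSS hSS' hc hScol,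
    col_eq_single_and_row_eq_single_iff]
  constructor
  · rintro ⟨h00, hoff⟩
    have hB := submatrix_succ_mem_unitary hVunitary (fun i => (hoff _ i.succ_ne_zero).2)
      (fun j => (hoff _ j.succ_ne_zero).1)
    exact ⟨h00, hoff, fun i j => star_transpose_map_algebraMap_mul_mul_apply hTstar hsa _ _,
      Unitary.mul_star_self_of_mem hB, Unitary.star_mul_self_of_mem hB⟩
  · exact fun ⟨h00, hoff, _⟩ => ⟨h00, hoff⟩
end

section
/- In the free fusion ring ℤM over a fusion set S, for a single letter s ∈ S and any word w = w₁…w_k with k ≥ 1, one has a_s · a_w = a_{sw} + a_{(s·w₁)w₂…w_k} + δ_{s̄, w₁} a_{w₂…w_k}, where the middle term is omitted if s·w₁ = ∅. Consequently, multiplication by a generator a_s increases the maximal word length of the support by exactly one. -/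
/-!
Multiplying `a_w` by a single letter `a_s` on the left, only the overlaps of length `0` and `1`
occur in the fusion product formula, which gives the three-term expansion. Every term other than
`a_{sw}` has length at most `|w|`, so in the length filtration left multiplication by `a_s` is
"unitriangular": the coefficient of `s w₀` in `a_s x`, for `w₀` of maximal length in the support
of `x`, is the coefficient of `w₀` in `x`, and nothing longer appears.
-/

section LengthShift

variable {k M S : Type*} [Ring k] [AddCommGroup M] [Module k M]
  (b : Module.Basis (List S) k M) (T : M →ₗ[k] M) (s : S)

def RaisesLengthByCons : Prop :=
  ∀ w u : List S, w.length < u.length → b.repr (T (b w)) u = Finsupp.single (s :: w) 1 u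

theorem Module.Basis.repr_map_apply (x : M) (u : List S) :
    b.repr (T x) u = ∑ w ∈ (b.repr x).support, b.repr x w * b.repr (T (b w)) u := by
  conv_lhs => rw [← b.linearCombination_repr x, Finsupp.linearCombination_apply, Finsupp.sum]
  simp only [map_sum, map_smul, Finsupp.coe_finsetSum, Finset.sum_apply, Finsupp.smul_apply,
    smul_eq_mul]

variable {b T s}

theorem RaisesLengthByCons.repr_eq_zero_of_length_lt (hT : RaisesLengthByCons b T s)
    {w u : List S} (h : w.length + 1 < u.length) : b.repr (T (b w)) u = 0 := by
  rw [hT w u (by omega), Finsupp.single_eq_of_ne]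
  rintro rfl
  simp at h

theorem RaisesLengthByCons.repr_map_eq_zero (hT : RaisesLengthByCons b T s) {x : M}
    {u : List S} (h : (b.repr x).support.sup List.length + 1 < u.length) :
    b.repr (T x) u = 0 := by
  rw [b.repr_map_apply]
  refine Finset.sum_eq_zero fun w hw => ?_
  have hw_le : w.length ≤ (b.repr x).support.sup List.length := Finset.le_sup hw
  rw [hT.repr_eq_zero_of_length_lt (by omega), mul_zero]

theorem RaisesLengthByCons.repr_map_cons (hT : RaisesLengthByCons b T s) {x : M}
    {w₀ : List S} (hw₀ : w₀ ∈ (b.repr x).support)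
    (hmax : w₀.length = (b.repr x).support.sup List.length) :
    b.repr (T x) (s :: w₀) = b.repr x w₀ := by
  rw [b.repr_map_apply, Finset.sum_eq_single_of_mem w₀ hw₀]
  · rw [hT w₀ _ (by simp), Finsupp.single_eq_same, mul_one]
  · intro w hw hne
    have hw_le : w.length ≤ (b.repr x).support.sup List.length := Finset.le_sup hw
    rw [hT w _ (by simp; omega), Finsupp.single_eq_of_ne (by simpa using hne.symm), mul_zero]

theorem RaisesLengthByCons.sup_length_support_repr_map (hT : RaisesLengthByCons b T s)
    {x : M} (hx : x ≠ 0) :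
    (b.repr (T x)).support.sup List.length = (b.repr x).support.sup List.length + 1 := by
  have hsupp : (b.repr x).support.Nonempty := by simpa using hx
  obtain ⟨w₀, hw₀, hmax⟩ := Finset.exists_mem_eq_sup _ hsupp List.length
  apply le_antisymm
  · refine Finset.sup_le fun u hu => ?_
    by_contra! hlen
    exact Finsupp.mem_support_iff.mp hu (hT.repr_map_eq_zero hlen)
  · have hmem : s :: w₀ ∈ (b.repr (T x)).support := by
      rw [Finsupp.mem_support_iff, hT.repr_map_cons hw₀ hmax.symm]
      exact Finsupp.mem_support_iff.mp hw₀
    simpa [hmax] using Finset.le_sup (f := List.length) hmem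

end LengthShift

section FusionProduct

variable {S R : Type*} [DecidableEq S] [Ring R] (f : S → S → Option S) (c : S → S)
  (b : Module.Basis (List S) ℤ R)

/-- The product `a_w a_{w'}` of the free fusion ring, summed over the length `n` of the overlap
`w = x y`, `w' = ȳ z`. -/
noncomputable def fusionProduct (w w' : List S) : R :=
  ∑ n ∈ Finset.range (min w.length w'.length + 1),
    if w'.take n = wconj c (w.drop (w.length - n)) then
      (b (w.take (w.length - n) ++ w'.drop n) +
        ((wfuse f (w.take (w.length - n)) (w'.drop n)).elim 0 (fun u => (b u : R))))
    else 0

theorem fusionProduct_singleton_nil (s : S) : fusionProduct f c b [s] [] = b [s] := by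
  simp [fusionProduct, wconj, wfuse]

theorem fusionProduct_singleton_cons (s w₁ : S) (t : List S) :
    fusionProduct f c b [s] (w₁ :: t) =
      b (s :: w₁ :: t) + ((f s w₁).elim 0 (fun r => (b (r :: t) : R))) +
        (if c s = w₁ then (b t : R) else 0) := by
  rw [fusionProduct, show min [s].length (w₁ :: t).length = 1 by simp, Finset.sum_range_succ,
    Finset.sum_range_one]
  rcases hfs : f s w₁ with _ | r <;> by_cases hc : c s = w₁ <;>
    simp [wconj, wfuse, hfs, hc, eq_comm (a := w₁)]

theorem raisesLengthByCons_mulLeft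
    (hmul : ∀ w w' : List S, b w * b w' = fusionProduct f c b w w') (s : S) :
    RaisesLengthByCons b (AddMonoidHom.mulLeft (b [s])).toIntLinearMap s := by
  intro w u hlen
  simp only [AddMonoidHom.coe_toIntLinearMap, AddMonoidHom.coe_mulLeft, hmul]
  cases w with
  | nil => simp [fusionProduct_singleton_nil, Finsupp.single_apply, eq_comm]
  | cons w₁ t =>
    have ht : t ≠ u := by rintro rfl; simp at hlen
    rw [fusionProduct_singleton_cons]
    rcases hfs : f s w₁ with _ | r
    · by_cases hc : c s = w₁ <;> simp [hc, Finsupp.single_apply, ht, eq_comm]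
    · have hr : r :: t ≠ u := by rintro rfl; simp at hlen
      by_cases hc : c s = w₁ <;> simp [hc, Finsupp.single_apply, ht, hr, eq_comm]

end FusionProduct

theorem freeFusionRing_letter_mul_general {S : Type*} [DecidableEq S]
    (f : S → S → Option S) (c : S → S)
    {R : Type*} [Ring R] (b : Module.Basis (List S) ℤ R)
    (hmul : ∀ w w' : List S, (b w : R) * b w' =
      ∑ n ∈ Finset.range (min w.length w'.length + 1),
        if w'.take n = wconj c (w.drop (w.length - n)) then
          (b (w.take (w.length - n) ++ w'.drop n) +
            ((wfuse f (w.take (w.length - n)) (w'.drop n)).elim 0 (fun u => (b u : R))))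
        else 0) :
    (∀ (s w₁ : S) (t : List S), (b [s] : R) * b (w₁ :: t) =
      b (s :: w₁ :: t) + ((f s w₁).elim 0 (fun r => (b (r :: t) : R))) +
        (if c s = w₁ then (b t : R) else 0)) ∧
    (∀ (s : S) (x : R), x ≠ 0 →
      ((b.repr ((b [s] : R) * x)).support.sup List.length) =
        ((b.repr x).support.sup List.length) + 1) := by
  have hmul' : ∀ w w' : List S, b w * b w' = fusionProduct f c b w w' := hmul
  exact ⟨fun s w₁ t => (hmul' _ _).trans (fusionProduct_singleton_cons f c b s w₁ t),
    fun s _ hx => (raisesLengthByCons_mulLeft f c b hmul' s).sup_length_support_repr_map hx⟩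

/-- In the free fusion ring over a fusion set `S`, for a letter `s` and a
nonempty word `w = w₁…w_k` one has
`a_s · a_w = a_{sw} + a_{(s·w₁)w₂…w_k} + δ_{s̄,w₁} a_{w₂…w_k}` (the middle
term omitted when `s·w₁ = ∅`); consequently multiplication by a generator
increases the maximal word length of the support by exactly one. -/
theorem freeFusionRing_letter_mul {S : Type*} [DecidableEq S]
    (f : S → S → Option S) (c : S → S)
    (hassoc : ∀ s t r : S, (f s t).bind (fun x => f x r) = (f t r).bind (fun x => f s x))
    (hinv : ∀ s : S, c (c s) = s)
    (hcompat : ∀ s₁ s₂ s₃ : S, f s₁ s₂ = some (c s₃) ↔ f s₂ s₃ = some (c s₁))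
    {R : Type*} [Ring R] (b : Module.Basis (List S) ℤ R)
    (hone : (b [] : R) = 1)
    (hmul : ∀ w w' : List S, (b w : R) * b w' =
      ∑ n ∈ Finset.range (min w.length w'.length + 1),
        if w'.take n = wconj c (w.drop (w.length - n)) then
          (b (w.take (w.length - n) ++ w'.drop n) +
            ((wfuse f (w.take (w.length - n)) (w'.drop n)).elim 0 (fun u => (b u : R))))
        else 0) :
    (∀ (s w₁ : S) (t : List S), (b [s] : R) * b (w₁ :: t) =
      b (s :: w₁ :: t) + ((f s w₁).elim 0 (fun r => (b (r :: t) : R))) +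
        (if c s = w₁ then (b t : R) else 0)) ∧
    (∀ (s : S) (x : R), x ≠ 0 →
      ((b.repr ((b [s] : R) * x)).support.sup List.length) =
        ((b.repr x).support.sup List.length) + 1) :=
  freeFusionRing_letter_mul_general f c b hmul
end
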